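/- Let Φ be a nondegenerate quadratic form on ℝ⁴ vanishing on three pairwise transversal 2-planes l₁, l₂, l₃ (corresponding to three pairwise disjoint projective lines in ℝP³), and let l₄ be a 2-plane transversal to each of l₁, l₂, l₃. If the restriction of Φ to l₄ is positive definite or negative definite (i.e., the projective line of l₄ misses the quadric {Φ=0}), then there is no projective line in ℝP³ meeting all four projective lines corresponding to l₁, l₂, l₃, l₄. -/
import Mathlib


/-- Let `Φ` (with symmetric nondegenerate bilinear form `B`, `Φ(v) = B(v,v)`)
vanish on three pairwise transversal 2-planes `L 0, L 1, L 2` in `ℝ⁴`, and let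
`L 3` be a 2-plane transversal to each of them whose corresponding projective
line misses the quadric `{Φ = 0}` (i.e. `Φ` restricted to `L 3` is positive or
negative definite). Then no projective line in `ℝP³` meets all four projective
lines: no 2-plane in `ℝ⁴` has nonzero intersection with all of
`L 0, L 1, L 2, L 3`. -/
theorem no_transversal_line
    (L : Fin 4 → Submodule ℝ (Fin 4 → ℝ))
    (hdim : ∀ i, Module.finrank ℝ (L i) = 2)
    (htrans : ∀ i j, i ≠ j → L i ⊓ L j = ⊥)
    (B : (Fin 4 → ℝ) →ₗ[ℝ] (Fin 4 → ℝ) →ₗ[ℝ] ℝ)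
    (hsym : ∀ v w, B v w = B w v)
    (hnondeg : ∀ v, (∀ w, B v w = 0) → v = 0)
    (hvanish : ∀ i : Fin 4, i ≠ 3 → ∀ v ∈ L i, B v v = 0)
    (hdef : (∀ v ∈ L 3, v ≠ 0 → 0 < B v v) ∨ (∀ v ∈ L 3, v ≠ 0 → B v v < 0)) :
    ¬ ∃ W : Submodule ℝ (Fin 4 → ℝ), Module.finrank ℝ W = 2 ∧
      ∀ i : Fin 4, W ⊓ L i ≠ ⊥ := by
  rintro ⟨W, hW2, hmeet⟩
  obtain ⟨v0, hv0, hv0ne⟩ := (Submodule.ne_bot_iff _).mp (hmeet 0)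
  obtain ⟨v1, hv1, hv1ne⟩ := (Submodule.ne_bot_iff _).mp (hmeet 1)
  obtain ⟨v2, hv2, hv2ne⟩ := (Submodule.ne_bot_iff _).mp (hmeet 2)
  obtain ⟨w, hw, hwne⟩ := (Submodule.ne_bot_iff _).mp (hmeet 3)
  have h00 : B v0 v0 = 0 := hvanish 0 (by decide) v0 hv0.2
  have h11 : B v1 v1 = 0 := hvanish 1 (by decide) v1 hv1.2
  have h22 : B v2 v2 = 0 := hvanish 2 (by decide) v2 hv2.2
  -- v0, v1 are linearly independent
  have hind : LinearIndependent ℝ ![v0, v1] := by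
    rw [LinearIndependent.pair_iff]
    intro s t hst
    have hs0 : s • v0 = 0 := by
      have hmem : s • v0 ∈ L 0 ⊓ L 1 := by
        refine ⟨(L 0).smul_mem s hv0.2, ?_⟩
        have : s • v0 = -(t • v1) := by
          rw [eq_neg_iff_add_eq_zero]; exact hst
        rw [this]
        exact (L 1).neg_mem ((L 1).smul_mem t hv1.2)
      rw [htrans 0 1 (by decide)] at hmem
      exact (Submodule.mem_bot ℝ).mp hmem
    have hs : s = 0 := by
      rcases smul_eq_zero.mp hs0 with h | h
      · exact h
      · exact absurd h hv0ne
    refine ⟨hs, ?_⟩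
    have ht0 : t • v1 = 0 := by
      rw [hs, zero_smul, zero_add] at hst
      exact hst
    rcases smul_eq_zero.mp ht0 with h | h
    · exact h
    · exact absurd h hv1ne
  -- span {v0, v1} = W
  have hrange : Set.range ![v0, v1] = {v0, v1} := by
    ext x
    simp [Fin.exists_fin_two, or_comm]
  have hspan : Submodule.span ℝ {v0, v1} = W := by
    apply Submodule.eq_of_le_of_finrank_le
    · rw [Submodule.span_le, Set.insert_subset_iff, Set.singleton_subset_iff]
      exact ⟨hv0.1, hv1.1⟩
    · rw [hW2]
      have := finrank_span_eq_card hind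
      rw [hrange] at this
      rw [this]
      simp
  -- B v0 v1 = 0
  have hB01 : B v0 v1 = 0 := by
    obtain ⟨a, b, hab⟩ := Submodule.mem_span_pair.mp (hspan ▸ hv2.1)
    have hane : a ≠ 0 := by
      rintro rfl
      have hm : v2 ∈ L 2 ⊓ L 1 := by
        refine ⟨hv2.2, ?_⟩
        rw [← hab]
        simpa using (L 1).smul_mem b hv1.2
      rw [htrans 2 1 (by decide)] at hm
      exact hv2ne ((Submodule.mem_bot ℝ).mp hm)
    have hbne : b ≠ 0 := by
      rintro rfl
      have hm : v2 ∈ L 2 ⊓ L 0 := by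
        refine ⟨hv2.2, ?_⟩
        rw [← hab]
        simpa using (L 0).smul_mem a hv0.2
      rw [htrans 2 0 (by decide)] at hm
      exact hv2ne ((Submodule.mem_bot ℝ).mp hm)
    have hexp : B v2 v2 = 2 * (a * b) * B v0 v1 := by
      rw [← hab]
      simp only [map_add, map_smul, LinearMap.add_apply, LinearMap.smul_apply,
        smul_eq_mul, h00, h11, hsym v1 v0]
      ring
    rw [h22] at hexp
    have h2ab : (2 : ℝ) * (a * b) ≠ 0 := by
      exact mul_ne_zero two_ne_zero (mul_ne_zero hane hbne)
    exact (mul_eq_zero.mp hexp.symm).resolve_left h2ab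
  -- B w w = 0, contradicting definiteness
  obtain ⟨c, d, hcd⟩ := Submodule.mem_span_pair.mp (hspan ▸ hw.1)
  have hww : B w w = 0 := by
    rw [← hcd]
    simp only [map_add, map_smul, LinearMap.add_apply, LinearMap.smul_apply,
      smul_eq_mul, h00, h11, hB01, hsym v1 v0]
    ring
  rcases hdef with h | h <;> nlinarith [h w hw.2 hwne]
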